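/- Fix k ≥ 1 and let p, q ∈ ℤ. Then the following eight identities hold: (1) ∂_0(c^{-1}_p·a^0_q) = 2(a^1_{p-1}·c^2_q + a^1_p·c^2_{q-1}) - 2a^1_{p-1}·a^1_q; (2) ∂_0(c^{-1}_p·f̃^0_k) = 2(a^1_{p-1}·c^2_k + a^1_p·c^2_{k-1}) - 2a^1_{p-1}·f^1_k; (3) ∂_0(ĉ^{-1}_{k+1}·a^0_q) = 2(f̃^1_k·c^2_q + a^1_{k+1}·c^2_{q-1}) - 2f̃^1_k·a^1_q; (4) ∂_0(ĉ^{-1}_{k+1}·f̃^0_k) = 2(f̃^1_k·c^2_k + a^1_{k+1}·c^2_{k-1}) - 2f̃^1_k·f^1_k; (5) ∂_1(c^{-1}_p·a^1_q) = 2(a^0_{p-1}·c^2_q + a^0_p·c^2_{q-1}) - 2a^0_{p-1}·a^0_q; (6) ∂_1(c^{-1}_p·f^1_k) = 2(a^0_{p-1}·c^2_k + a^0_p·c^2_{k-1}) - 2a^0_{p-1}·f̃_k; (7) ∂_1(ĉ^{-1}_{k+1}·a^1_q) = 2(f^0_k·c^2_q + a^0_{k+1}·c^2_{q-1}) - 2f_k·a^0_q;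 (8) ∂_1(ĉ^{-1}_{k+1}·f^1_k) = 2(f^0_k·c^2_k + a^0_{k+1}·c^2_{k-1}) - 2f_k·f̃_k. -/

import Mathlib

/-!
The polynomial ring `R2 = ℚ[c₁, c₂, …, t₁, t₂, …, f_k]`: the variable `Sum.inl p`
(for `p ≥ 1`) is `c_p`, `Sum.inr i` (for `i ≥ 1`) is `t_i`, and `Sum.inl 0` is the
adjoined variable `f_k`.
-/

noncomputable section
open MvPolynomial Finset
open scoped Classical

abbrev R2 : Type := MvPolynomial (ℕ ⊕ ℕ) ℚ

/-- The variable `t_i`. -/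
def Tv (i : ℕ) : R2 := X (Sum.inr i)

/-- The adjoined variable `f_k`. -/
def fk : R2 := X (Sum.inl 0)

/-- `c_p`, with the conventions `c_0 = 1` and `c_p = 0` for `p < 0`. -/
def Cv (p : ℤ) : R2 := if p < 0 then 0 else if p = 0 then 1 else X (Sum.inl p.toNat)

/-- The complete homogeneous symmetric polynomial `h_j` evaluated on a list. -/
def hfun : List R2 → ℕ → R2
  | [], j => if j = 0 then 1 else 0
  | a :: L, j => ∑ i ∈ Finset.range (j + 1), a ^ i * hfun L (j - i)

/-- The elementary symmetric polynomial `e_j` evaluated on a list. -/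
def efun : List R2 → ℕ → R2
  | [], j => if j = 0 then 1 else 0
  | _ :: _, 0 => 1
  | a :: L, j + 1 => efun L (j + 1) + a * efun L j

/-- The list `(-t_1, …, -t_r)`. -/
def negT (r : ℕ) : List R2 := (List.range r).map fun i => -Tv (i + 1)

/-- `h^r_j(-t)`: complete homogeneous for `r ≥ 0`, elementary `e^{-r}_j(-t)` for `r < 0`. -/
def hmt (r : ℤ) (j : ℕ) : R2 :=
  if 0 ≤ r then hfun (negT r.toNat) j else efun (negT (-r).toNat) j

/-- `c^r_p := Σ_{j=0}^p c_{p-j} h^r_j(-t)`. -/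
def cc (r p : ℤ) : R2 := ∑ j ∈ Finset.range (p.toNat + 1), Cv (p - j) * hmt r j

/-- `a^s_p := (1/2)c_p + Σ_{j=1}^p c_{p-j} h^s_j(-t)`. -/
def aa (s p : ℤ) : R2 :=
  C (1/2 : ℚ) * Cv p + ∑ j ∈ Finset.Icc 1 p.toNat, Cv (p - j) * hmt s j

/-- `e^s_s(-t) = (-t_1)⋯(-t_s)`. -/
def eprod (s : ℤ) : R2 := ∏ i ∈ Finset.range s.toNat, -Tv (i + 1)

/-- `ĉ^r_p := c^r_p + (2f_k - c_k)e^{p-k}_{p-k}(-t)` when `r = k - p < 0`, else `c^r_p`. -/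
def chat (k : ℕ) (r p : ℤ) : R2 :=
  if r = (k : ℤ) - p ∧ r < 0 then cc r p + (2 * fk - Cv k) * eprod (p - k) else cc r p

/-- `f̃_k := c_k - f_k`. -/
def ftil (k : ℕ) : R2 := Cv k - fk

/-- `f^s_k := f_k + Σ_{j=1}^k c_{k-j} h^s_j(-t)`. -/
def fks (k : ℕ) (s : ℤ) : R2 := fk + ∑ j ∈ Finset.Icc 1 k, Cv ((k : ℤ) - j) * hmt s j

/-- `f̃^s_k := c_k - 2f_k + f^s_k`. -/
def ftils (k : ℕ) (s : ℤ) : R2 := Cv k - 2 * fk + fks k s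

/-- Images of the variables under the automorphism `s_i` (depending on `k` via `s_0(f_k)`). -/
def sImgF (k : ℕ) : ℕ → ℕ ⊕ ℕ → R2
  | 0, Sum.inr j => if j = 1 then -Tv 2 else if j = 2 then -Tv 1 else Tv j
  | 0, Sum.inl p =>
      if p = 0 then fk - (Tv 1 + Tv 2) * cc 2 ((k : ℤ) - 1)
      else Cv p - 2 * (Tv 1 + Tv 2) *
        ∑ j ∈ Finset.range p, (-1 : R2) ^ j *
          (∑ a ∈ Finset.range (j + 1), Tv 1 ^ a * Tv 2 ^ (j - a)) * Cv ((p : ℤ) - 1 - j)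
  | i + 1, Sum.inr j =>
      if j = i + 1 then Tv (i + 2) else if j = i + 2 then Tv (i + 1) else Tv j
  | _ + 1, Sum.inl p => X (Sum.inl p)

/-- The ring automorphism `s_i` of `R2`. -/
def sA (k i : ℕ) : R2 →ₐ[ℚ] R2 := aeval (sImgF k i)

/-- The fraction field of `R2`. -/
abbrev KK : Type := FractionRing R2

/-- The canonical embedding of `R2` into its fraction field. -/
def toK : R2 →+* KK := algebraMap R2 KK

/-- The denominator `t_1 + t_2` (for `i = 0`) resp. `t_{i+1} - t_i` (for `i ≥ 1`). -/
def dden (i : ℕ) : R2 := if i = 0 then Tv 1 + Tv 2 else Tv (i + 1) - Tv i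

/-- The divided difference operator `∂_i`, with values in the fraction field. -/
def dd (k i : ℕ) (f : R2) : KK := (toK f - toK (sA k i f)) / toK (dden i)

/-!
With `C(u) = Σ c_p u^p` and `H^r(u) = Σ_j h^r_j(-t) u^j` one has `c^r_p = [u^p] C(u) H^r(u)`,
where `H^0 = 1`, `H^{-1} = 1 - t_1 u`, `H^1 = 1 / (1 + t_1 u)` and
`H^2 = 1 / ((1 + t_1 u)(1 + t_2 u))`. Hence `c_p`, `c^{±1}_p`, `a^s_p`, `f^s_k`, `f̃^s_k` and
`ĉ^{-1}_{k+1}` are polynomials in `t_1`, `t_2`, `f_k` and the coefficients `c^2_q` of `C(u) H^2(u)`.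
This series is fixed by `s_1`, and also by `s_0`, which multiplies `C(u)` by
`(1 - t_1 u)(1 - t_2 u) H^2(u)` and sends `H^2(u)` to `1 / ((1 - t_1 u)(1 - t_2 u))`. So `s_0` and
`s_1` act on these generators explicitly, and each of the eight identities becomes a polynomial
identity in `t_1`, `t_2`, `f_k` and the `c^2_q`.
-/

section IntCoeff

variable {R : Type*} [Semiring R]

def intCoeff (p : ℤ) : PowerSeries R →ₗ[R] R := if p < 0 then 0 else PowerSeries.coeff p.toNat

lemma intCoeff_of_neg {p : ℤ} (hp : p < 0) (φ : PowerSeries R) : intCoeff p φ = 0 := by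
  simp [intCoeff, hp]

lemma intCoeff_natCast (n : ℕ) (φ : PowerSeries R) : intCoeff n φ = PowerSeries.coeff n φ := by
  rw [intCoeff, if_neg (Int.natCast_nonneg n).not_gt, Int.toNat_natCast]

lemma intCoeff_mul_X (p : ℤ) (φ : PowerSeries R) :
    intCoeff p (φ * PowerSeries.X) = intCoeff (p - 1) φ := by
  rcases lt_trichotomy p 0 with hp | rfl | hp
  · rw [intCoeff_of_neg hp, intCoeff_of_neg (by omega)]
  · rw [intCoeff_of_neg (show (0 : ℤ) - 1 < 0 by norm_num), ← Nat.cast_zero, intCoeff_natCast,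
      PowerSeries.coeff_zero_mul_X]
  · obtain ⟨n, rfl⟩ : ∃ n : ℕ, p = n + 1 := ⟨(p - 1).toNat, by omega⟩
    rw [add_sub_cancel_right, ← Nat.cast_succ, intCoeff_natCast, intCoeff_natCast,
      PowerSeries.coeff_succ_mul_X]

lemma intCoeff_C_mul (p : ℤ) (a : R) (φ : PowerSeries R) :
    intCoeff p (PowerSeries.C a * φ) = a * intCoeff p φ := by
  rw [← PowerSeries.smul_eq_C_mul, map_smul, smul_eq_mul]

end IntCoeff

lemma Cv_of_neg {p : ℤ} (hp : p < 0) : Cv p = 0 := if_pos hp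

lemma Cv_of_pos {p : ℤ} (hp : 0 < p) : Cv p = X (Sum.inl p.toNat) := by
  rw [Cv, if_neg (by omega), if_neg (by omega)]

lemma map_Cv_of_nonpos {F : Type*} [FunLike F R2 R2] [RingHomClass F R2 R2] (σ : F) {p : ℤ}
    (hp : p ≤ 0) : σ (Cv p) = Cv p := by
  rcases hp.lt_or_eq with hp | rfl
  · rw [Cv_of_neg hp, map_zero]
  · exact map_one σ

lemma hfun_nil (j : ℕ) : hfun [] j = if j = 0 then 1 else 0 := rfl

lemma hfun_zero (L : List R2) : hfun L 0 = 1 := by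
  induction L with
  | nil => rfl
  | cons a L ih => simp [hfun, ih]

lemma efun_zero (L : List R2) : efun L 0 = 1 := by
  cases L <;> simp [efun]

lemma hfun_singleton (a : R2) (j : ℕ) : hfun [a] j = a ^ j := by
  rw [hfun, Finset.sum_eq_single_of_mem j (Finset.self_mem_range_succ j)]
  · simp [hfun_nil]
  · intro i hi hij
    rw [hfun_nil, if_neg (by grind), mul_zero]

lemma hfun_pair (a b : R2) (j : ℕ) :
    hfun [a, b] j = ∑ i ∈ range (j + 1), a ^ i * b ^ (j - i) := by
  show ∑ i ∈ range (j + 1), a ^ i * hfun [b] (j - i) = _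
  simp only [hfun_singleton]

lemma hfun_pair_succ (a b : R2) (j : ℕ) :
    hfun [a, b] (j + 1) = a ^ (j + 1) + b * hfun [a, b] j := by
  rw [hfun_pair, hfun_pair, sum_range_succ, Nat.sub_self, pow_zero, mul_one, add_comm, mul_sum]
  congr 1
  refine sum_congr rfl fun i hi => ?_
  rw [Nat.sub_add_comm (Nat.le_of_lt_succ (mem_range.mp hi)), pow_succ]
  ring

lemma hmt_zero_right (r : ℤ) : hmt r 0 = 1 := by
  unfold hmt; split_ifs
  · exact hfun_zero _
  · exact efun_zero _

lemma hmt_zero_left (j : ℕ) : hmt 0 j = if j = 0 then 1 else 0 := rfl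

lemma hmt_one_left (j : ℕ) : hmt 1 j = (-Tv 1) ^ j := hfun_singleton _ j

lemma hmt_two_left (j : ℕ) : hmt 2 j = hfun [-Tv 1, -Tv 2] j := rfl

lemma hmt_two_left_eq (j : ℕ) :
    hmt 2 j = (-1) ^ j * ∑ a ∈ range (j + 1), Tv 1 ^ a * Tv 2 ^ (j - a) := by
  rw [hmt_two_left, hfun_pair, mul_sum]
  refine sum_congr rfl fun a ha => ?_
  rw [neg_pow, neg_pow (Tv 2), ← Nat.add_sub_of_le (Nat.le_of_lt_succ (mem_range.mp ha)), pow_add,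
    Nat.add_sub_cancel_left]
  ring

lemma hmt_neg_one_left (j : ℕ) :
    hmt (-1) j = if j = 0 then 1 else if j = 1 then -Tv 1 else 0 := by
  match j with
  | 0 => rfl
  | 1 => show efun [] 1 + (-Tv 1) * efun [] 0 = _; simp [efun]
  | j + 2 => show efun [] (j + 2) + (-Tv 1) * efun [] (j + 1) = _; simp [efun]

def cSeries : PowerSeries R2 := PowerSeries.mk fun n => Cv n

def hSeries (r : ℤ) : PowerSeries R2 := PowerSeries.mk (hmt r)

lemma intCoeff_cSeries (p : ℤ) : intCoeff p cSeries = Cv p := by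
  rcases lt_or_ge p 0 with hp | hp
  · rw [intCoeff_of_neg hp, Cv_of_neg hp]
  · lift p to ℕ using hp
    rw [intCoeff_natCast, cSeries, PowerSeries.coeff_mk]

lemma cc_eq_intCoeff (r p : ℤ) : cc r p = intCoeff p (cSeries * hSeries r) := by
  rcases lt_or_ge p 0 with hp | hp
  · rw [intCoeff_of_neg hp, cc, Int.toNat_of_nonpos hp.le, sum_range_one, Nat.cast_zero, sub_zero,
      Cv_of_neg hp, zero_mul]
  · lift p to ℕ using hp
    rw [intCoeff_natCast, mul_comm, PowerSeries.coeff_mul,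
      Nat.sum_antidiagonal_eq_sum_range_succ (fun i j => PowerSeries.coeff i (hSeries r) *
        PowerSeries.coeff j cSeries), cc, Int.toNat_natCast]
    refine sum_congr rfl fun j hj => ?_
    rw [hSeries, cSeries, PowerSeries.coeff_mk, PowerSeries.coeff_mk,
      Nat.cast_sub (Nat.le_of_lt_succ (mem_range.mp hj)), mul_comm]

lemma cc_of_neg (r : ℤ) {p : ℤ} (hp : p < 0) : cc r p = 0 := by
  rw [cc_eq_intCoeff, intCoeff_of_neg hp]

lemma hSeries_zero : hSeries 0 = 1 := by
  ext1 j
  rw [hSeries, PowerSeries.coeff_mk, hmt_zero_left, PowerSeries.coeff_one]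

lemma hSeries_neg_one : hSeries (-1) = 1 - PowerSeries.C (Tv 1) * PowerSeries.X := by
  ext1 j
  rcases j with _ | _ | j <;> simp [hSeries, hmt_neg_one_left]

lemma hSeries_one_mul : hSeries 1 * (1 + PowerSeries.C (Tv 1) * PowerSeries.X) = 1 := by
  ext1 j
  rcases j with _ | j
  · simp [hSeries, hmt_zero_right]
  · rw [mul_add, mul_one, mul_left_comm, map_add, PowerSeries.coeff_C_mul,
      PowerSeries.coeff_succ_mul_X, hSeries, PowerSeries.coeff_mk, PowerSeries.coeff_mk,
      hmt_one_left, hmt_one_left, PowerSeries.coeff_one, if_neg j.succ_ne_zero, pow_succ]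
    ring

lemma hSeries_two_mul : hSeries 2 * (1 + PowerSeries.C (Tv 2) * PowerSeries.X) = hSeries 1 := by
  ext1 j
  rcases j with _ | j
  · simp [hSeries, hmt_zero_right]
  · rw [mul_add, mul_one, mul_left_comm, map_add, PowerSeries.coeff_C_mul,
      PowerSeries.coeff_succ_mul_X, hSeries, hSeries, PowerSeries.coeff_mk, PowerSeries.coeff_mk,
      PowerSeries.coeff_mk, hmt_two_left, hmt_two_left, hfun_pair_succ, hmt_one_left]
    ring

lemma cc_zero_left (p : ℤ) : cc 0 p = Cv p := by
  rw [cc_eq_intCoeff, hSeries_zero, mul_one, intCoeff_cSeries]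

lemma cc_neg_one_left (p : ℤ) : cc (-1) p = Cv p - Tv 1 * Cv (p - 1) := by
  rw [cc_eq_intCoeff, hSeries_neg_one, mul_sub, mul_one, map_sub, mul_left_comm, intCoeff_C_mul,
    intCoeff_mul_X, intCoeff_cSeries, intCoeff_cSeries]

lemma cc_one_left (p : ℤ) : cc 1 p = cc 2 p + Tv 2 * cc 2 (p - 1) := by
  rw [cc_eq_intCoeff, cc_eq_intCoeff, cc_eq_intCoeff, ← hSeries_two_mul, ← mul_assoc, mul_add,
    mul_one, map_add, mul_left_comm, intCoeff_C_mul, intCoeff_mul_X]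

lemma Cv_eq_cc_two (p : ℤ) :
    Cv p = cc 2 p + (Tv 1 + Tv 2) * cc 2 (p - 1) + Tv 1 * Tv 2 * cc 2 (p - 2) := by
  set φ := cSeries * hSeries 2
  have hφ : cSeries = φ + PowerSeries.C (Tv 1 + Tv 2) * (φ * PowerSeries.X) +
      PowerSeries.C (Tv 1 * Tv 2) * (φ * PowerSeries.X * PowerSeries.X) := calc
    cSeries = cSeries * (hSeries 2 * (1 + PowerSeries.C (Tv 2) * PowerSeries.X) *
        (1 + PowerSeries.C (Tv 1) * PowerSeries.X)) := by
      rw [hSeries_two_mul, hSeries_one_mul, mul_one]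
    _ = _ := by simp only [φ, map_add, map_mul]; ring
  rw [← intCoeff_cSeries, hφ, map_add, map_add, intCoeff_C_mul, intCoeff_C_mul, intCoeff_mul_X,
    intCoeff_mul_X, intCoeff_mul_X, sub_sub, one_add_one_eq_two, cc_eq_intCoeff, cc_eq_intCoeff,
    cc_eq_intCoeff]

lemma cc_eq_Cv_add_sum (r p : ℤ) :
    cc r p = Cv p + ∑ j ∈ Icc 1 p.toNat, Cv (p - j) * hmt r j := by
  rw [cc, Nat.range_succ_eq_Icc_zero, ← insert_Icc_add_one_left_eq_Icc (Nat.zero_le _),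
    sum_insert (by simp), zero_add, Nat.cast_zero, sub_zero, hmt_zero_right, mul_one]

lemma C_half_add_C_half : (C (1 / 2 : ℚ) + C (1 / 2) : R2) = 1 := by
  rw [← C_add, add_halves, C_1]

lemma aa_eq (s p : ℤ) : aa s p = cc s p - C (1 / 2 : ℚ) * Cv p := by
  rw [aa, cc_eq_Cv_add_sum]
  linear_combination Cv p * C_half_add_C_half

lemma fks_eq (k : ℕ) (s : ℤ) : fks k s = fk + cc s k - Cv k := by
  rw [fks, cc_eq_Cv_add_sum, Int.toNat_natCast]
  ring

lemma ftils_eq (k : ℕ) (s : ℤ) : ftils k s = cc s k - fk := by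
  rw [ftils, fks_eq]
  ring

lemma chat_neg_one (k : ℕ) : chat k (-1) (k + 1) = Cv (k + 1) - 2 * Tv 1 * fk := by
  rw [chat, if_pos ⟨by ring, by norm_num⟩, add_sub_cancel_left, cc_neg_one_left,
    add_sub_cancel_right, eprod, Int.toNat_one, prod_range_one, zero_add]
  ring

lemma map_cc_two_eq_self {F : Type*} [FunLike F R2 R2] [RingHomClass F R2 R2] (σ : F) (d : R2)
    (hC : ∀ p, σ (Cv p) = Cv p + d * cc 2 (p - 1)) (hsum : σ (Tv 1 + Tv 2) = Tv 1 + Tv 2 + d)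
    (hprod : σ (Tv 1 * Tv 2) = Tv 1 * Tv 2) (p : ℤ) : σ (cc 2 p) = cc 2 p := by
  have hrec (q : ℤ) :
      cc 2 q = Cv q - (Tv 1 + Tv 2) * cc 2 (q - 1) - Tv 1 * Tv 2 * cc 2 (q - 2) := by
    linear_combination -Cv_eq_cc_two q
  suffices ∀ n : ℕ, ∀ q : ℤ, q < n → σ (cc 2 q) = cc 2 q from this (p.toNat + 1) p (by omega)
  intro n
  induction n with
  | zero => intro q hq; rw [cc_of_neg _ (by omega), map_zero]
  | succ n ih =>
    intro q hq
    rw [hrec q, map_sub, map_sub, map_mul σ (Tv 1 + Tv 2), map_mul σ (Tv 1 * Tv 2), hC, hsum,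
      hprod, ih (q - 1) (by omega), ih (q - 2) (by omega)]
    ring

section Action

variable (k : ℕ)

lemma sA_zero_Tv_one : sA k 0 (Tv 1) = -Tv 2 := by rw [Tv, sA, aeval_X]; rfl

lemma sA_zero_Tv_two : sA k 0 (Tv 2) = -Tv 1 := by rw [Tv, sA, aeval_X]; rfl

lemma sA_zero_fk : sA k 0 fk = fk - (Tv 1 + Tv 2) * cc 2 (k - 1) := by rw [fk, sA, aeval_X]; rfl

lemma sA_one_Tv_one : sA k 1 (Tv 1) = Tv 2 := by rw [Tv, sA, aeval_X]; rfl

lemma sA_one_Tv_two : sA k 1 (Tv 2) = Tv 1 := by rw [Tv, sA, aeval_X]; rfl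

lemma sA_one_fk : sA k 1 fk = fk := by rw [fk, sA, aeval_X]; rfl

lemma sA_zero_Cv (p : ℤ) : sA k 0 (Cv p) = Cv p - 2 * (Tv 1 + Tv 2) * cc 2 (p - 1) := by
  rcases le_or_gt p 0 with hp | hp
  · rw [map_Cv_of_nonpos _ hp, cc_of_neg _ (by omega), mul_zero, sub_zero]
  · rw [Cv_of_pos hp, sA, aeval_X]
    simp only [sImgF, if_neg (show p.toNat ≠ 0 by omega)]
    rw [Int.toNat_of_nonneg hp.le, ← Cv_of_pos hp, cc, show (p - 1).toNat + 1 = p.toNat by omega]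
    congr 2
    refine sum_congr rfl fun j _ => ?_
    rw [hmt_two_left_eq]
    ring

lemma sA_one_Cv (p : ℤ) : sA k 1 (Cv p) = Cv p := by
  rcases le_or_gt p 0 with hp | hp
  · exact map_Cv_of_nonpos _ hp
  · rw [Cv_of_pos hp, sA, aeval_X]; rfl

lemma sA_zero_cc_two (p : ℤ) : sA k 0 (cc 2 p) = cc 2 p := by
  refine map_cc_two_eq_self _ (-2 * (Tv 1 + Tv 2)) (fun p => ?_) ?_ ?_ p
  · rw [sA_zero_Cv]; ring
  · rw [map_add, sA_zero_Tv_one, sA_zero_Tv_two]; ring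
  · rw [map_mul, sA_zero_Tv_one, sA_zero_Tv_two]; ring

lemma sA_one_cc_two (p : ℤ) : sA k 1 (cc 2 p) = cc 2 p := by
  refine map_cc_two_eq_self _ 0 (fun p => ?_) ?_ ?_ p
  · rw [sA_one_Cv, zero_mul, add_zero]
  · rw [map_add, sA_one_Tv_one, sA_one_Tv_two, add_zero, add_comm]
  · rw [map_mul, sA_one_Tv_one, sA_one_Tv_two, mul_comm]

end Action

lemma dden_zero : dden 0 = Tv 1 + Tv 2 := rfl

lemma dden_one : dden 1 = Tv 2 - Tv 1 := rfl

lemma dden_ne_zero (i : ℕ) : dden i ≠ 0 := by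
  rcases i with _ | i
  · intro h
    simpa [dden, Tv] using congrArg (eval fun _ => (1 : ℚ)) h
  · rw [dden, if_neg i.succ_ne_zero, Tv, Tv, sub_ne_zero]
    exact fun h => by simpa using X_injective h

lemma dd_eq_toK {k i : ℕ} {f g : R2}
    (h : toK f - toK (sA k i f) = toK (dden i) * toK g) : dd k i f = toK g := by
  have hd : toK (dden i) ≠ 0 :=
    (map_ne_zero_iff _ (IsFractionRing.injective R2 KK)).mpr (dden_ne_zero i)
  rw [dd, h, mul_div_cancel_left₀ _ hd]

lemma toK_C_half : toK (C (1 / 2 : ℚ)) = 1 / 2 := by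
  rw [toK, ← algebraMap_eq, ← IsScalarTower.algebraMap_apply, map_div₀, map_one, map_ofNat]

theorem statement12_general (k : ℕ) (p q : ℤ) :
    dd k 0 (cc (-1) p * aa 0 q) =
      toK (2 * (aa 1 (p - 1) * cc 2 q + aa 1 p * cc 2 (q - 1)) - 2 * aa 1 (p - 1) * aa 1 q) ∧
    dd k 0 (cc (-1) p * ftils k 0) =
      toK (2 * (aa 1 (p - 1) * cc 2 k + aa 1 p * cc 2 ((k : ℤ) - 1)) -
        2 * aa 1 (p - 1) * fks k 1) ∧
    dd k 0 (chat k (-1) ((k : ℤ) + 1) * aa 0 q) =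
      toK (2 * (ftils k 1 * cc 2 q + aa 1 ((k : ℤ) + 1) * cc 2 (q - 1)) -
        2 * ftils k 1 * aa 1 q) ∧
    dd k 0 (chat k (-1) ((k : ℤ) + 1) * ftils k 0) =
      toK (2 * (ftils k 1 * cc 2 k + aa 1 ((k : ℤ) + 1) * cc 2 ((k : ℤ) - 1)) -
        2 * ftils k 1 * fks k 1) ∧
    dd k 1 (cc (-1) p * aa 1 q) =
      toK (2 * (aa 0 (p - 1) * cc 2 q + aa 0 p * cc 2 (q - 1)) - 2 * aa 0 (p - 1) * aa 0 q) ∧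
    dd k 1 (cc (-1) p * fks k 1) =
      toK (2 * (aa 0 (p - 1) * cc 2 k + aa 0 p * cc 2 ((k : ℤ) - 1)) -
        2 * aa 0 (p - 1) * ftil k) ∧
    dd k 1 (chat k (-1) ((k : ℤ) + 1) * aa 1 q) =
      toK (2 * (fks k 0 * cc 2 q + aa 0 ((k : ℤ) + 1) * cc 2 (q - 1)) - 2 * fk * aa 0 q) ∧
    dd k 1 (chat k (-1) ((k : ℤ) + 1) * fks k 1) =
      toK (2 * (fks k 0 * cc 2 k + aa 0 ((k : ℤ) + 1) * cc 2 ((k : ℤ) - 1)) -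
        2 * fk * ftil k) := by
  refine ⟨?_, ?_, ?_, ?_, ?_, ?_, ?_, ?_⟩ <;> apply dd_eq_toK <;>
    simp only [chat_neg_one, ftils_eq, fks_eq, ftil, aa_eq, cc_zero_left, cc_neg_one_left,
      cc_one_left, Cv_eq_cc_two, map_sub, map_add, map_mul, map_neg, map_ofNat, algHom_C,
      algebraMap_eq, sA_zero_cc_two, sA_zero_Tv_one, sA_zero_Tv_two, sA_zero_fk, sA_one_cc_two,
      sA_one_Tv_one, sA_one_Tv_two, sA_one_fk, toK_C_half, dden_zero, dden_one] <;>
    -- `ring_nf` rather than `ring`: the shifted indices (`p - 1 - 1`, `↑k + 1 - 2`, ...) inside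
    -- `cc 2` must be normalized too.
    ring_nf

theorem statement12 (k : ℕ) (hk : 1 ≤ k) (p q : ℤ) :
    dd k 0 (cc (-1) p * aa 0 q) =
      toK (2 * (aa 1 (p - 1) * cc 2 q + aa 1 p * cc 2 (q - 1)) - 2 * aa 1 (p - 1) * aa 1 q) ∧
    dd k 0 (cc (-1) p * ftils k 0) =
      toK (2 * (aa 1 (p - 1) * cc 2 k + aa 1 p * cc 2 ((k : ℤ) - 1)) -
        2 * aa 1 (p - 1) * fks k 1) ∧
    dd k 0 (chat k (-1) ((k : ℤ) + 1) * aa 0 q) =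
      toK (2 * (ftils k 1 * cc 2 q + aa 1 ((k : ℤ) + 1) * cc 2 (q - 1)) -
        2 * ftils k 1 * aa 1 q) ∧
    dd k 0 (chat k (-1) ((k : ℤ) + 1) * ftils k 0) =
      toK (2 * (ftils k 1 * cc 2 k + aa 1 ((k : ℤ) + 1) * cc 2 ((k : ℤ) - 1)) -
        2 * ftils k 1 * fks k 1) ∧
    dd k 1 (cc (-1) p * aa 1 q) =
      toK (2 * (aa 0 (p - 1) * cc 2 q + aa 0 p * cc 2 (q - 1)) - 2 * aa 0 (p - 1) * aa 0 q) ∧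
    dd k 1 (cc (-1) p * fks k 1) =
      toK (2 * (aa 0 (p - 1) * cc 2 k + aa 0 p * cc 2 ((k : ℤ) - 1)) -
        2 * aa 0 (p - 1) * ftil k) ∧
    dd k 1 (chat k (-1) ((k : ℤ) + 1) * aa 1 q) =
      toK (2 * (fks k 0 * cc 2 q + aa 0 ((k : ℤ) + 1) * cc 2 (q - 1)) - 2 * fk * aa 0 q) ∧
    dd k 1 (chat k (-1) ((k : ℤ) + 1) * fks k 1) =
      toK (2 * (fks k 0 * cc 2 k + aa 0 ((k : ℤ) + 1) * cc 2 ((k : ℤ) - 1)) -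
        2 * fk * ftil k) :=
  statement12_general k p q
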